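/- arXiv:2303.16968 — 4 statements merged into one kernel-verified Lean document; each statement's English description precedes it below -/
import Mathlib

section
/- Suppose r ≥ 1. For every nonempty subset I ⊆ {1, …, r}, the ideal P_I = ∏_{i∈I} Pᵢ is not well-rounded. -/
open NumberField

/-- Squared length of an element of a totally real cubic field under the Minkowski
embedding: `‖x‖² = Tr_{F/ℚ}(x²)`. -/
noncomputable def cubicLenSq (K : Type*) [Field K] [NumberField K] (x : K) : ℚ :=
  Algebra.trace ℚ K (x * x)

/-- `v` is a nonzero element of the ideal `I` of minimal squared length. -/
def IsMinimalVector (K : Type*) [Field K] [NumberField K]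
    (I : Ideal (𝓞 K)) (v : 𝓞 K) : Prop :=
  v ∈ I ∧ v ≠ 0 ∧ ∀ w : 𝓞 K, w ∈ I → w ≠ 0 → cubicLenSq K (v : K) ≤ cubicLenSq K (w : K)

/-- An ideal of the ring of integers of a cubic field is well-rounded if its set of
nonzero elements of minimal squared length contains three `ℚ`-linearly independent
elements. -/
def IsWellRounded3 (K : Type*) [Field K] [NumberField K] (I : Ideal (𝓞 K)) : Prop :=
  ∃ v₁ v₂ v₃ : 𝓞 K, IsMinimalVector K I v₁ ∧ IsMinimalVector K I v₂ ∧
    IsMinimalVector K I v₃ ∧ LinearIndependent ℚ ![(v₁ : K), (v₂ : K), (v₃ : K)]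

/-!
Let `τ` be the automorphism of `𝓞 K` induced by `σ`, `J = ∏ᵢ Pᵢ`, `n = ∏ᵢ pᵢ` and `μ` the minimum
of `x ↦ Tr(x²)` on `J ∖ {0}`, so `μ ≤ Tr(n²) = 3n²`. Traces of elements of `J` lie in `J ∩ ℤ = nℤ`
and, since `τ` acts trivially on `𝓞 K / P₀ ≅ 𝔽₃`, in `3ℤ`; so they are divisible by `3n`.
For a minimal vector `v` put `t = Tr v` and `c = Tr(v · τv)`; then `t² = μ + 2c`.
If `τv = v`, then `t = 3v ≠ 0` and `t² = 3μ`, which forces `μ = 3n²`.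
Otherwise `v - τv` is a nonzero vector of `J` of squared length `2μ - 2c`, so `t² ≤ 2μ < 9n²`,
which forces `t = 0` and `μ = -2c`. As `n` is odd the two cases cannot both occur, so the minimal
vectors all lie in the fixed space of `σ` or all in the kernel of the trace, both proper subspaces.
-/

open Module

theorem Int.sq_le_sq_of_dvd {a b : ℤ} (hab : a ∣ b) (hb : b ≠ 0) : a ^ 2 ≤ b ^ 2 :=
  Int.natAbs_le_iff_sq_le.mp (Int.natAbs_le_of_dvd_ne_zero hab hb)

theorem Ideal.map_eq_self_of_span_natCast_eq_pow {R : Type*} [CommRing R] (τ : R ≃+* R)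
    {P : Ideal R} (hP : P.IsPrime) {c k : ℕ} (hk : k ≠ 0) (hc : Ideal.span {(c : R)} = P ^ k) :
    P.map (τ : R →+* R) = P := by
  have hrad : P = (Ideal.span {(c : R)}).radical := by
    rw [hc, Ideal.radical_pow P hk, hP.radical]
  rw [Ideal.map_comap_of_equiv, hrad, Ideal.comap_radical, Ideal.comap_symm, Ideal.map_span,
    Set.image_singleton, map_natCast]

theorem Ideal.exists_intCast_sub_mem_of_card_quotient_prime {R : Type*} [CommRing R]
    {P : Ideal R} {q : ℕ} (hq : q.Prime) (hcard : Nat.card (R ⧸ P) = q) (x : R) :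
    ∃ k : ℤ, x - k ∈ P := by
  have : Finite (R ⧸ P) := Nat.finite_of_card_ne_zero (hcard ▸ hq.ne_zero)
  have := Fintype.ofFinite (R ⧸ P)
  let e := ZMod.ringEquivOfPrime (R ⧸ P) hq (Nat.card_eq_fintype_card (α := R ⧸ P) ▸ hcard)
  obtain ⟨k, hk⟩ := ZMod.intCast_surjective (e.symm (Ideal.Quotient.mk P x))
  refine ⟨k, Ideal.Quotient.eq_zero_iff_mem.mp ?_⟩
  rw [map_sub, map_intCast, ← map_intCast e, hk, RingEquiv.apply_symm_apply, sub_self]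

theorem Ideal.apply_sub_mem_of_card_quotient_prime {R : Type*} [CommRing R] (τ : R ≃+* R)
    {P : Ideal R} (hτP : P.map (τ : R →+* R) = P) {q : ℕ} (hq : q.Prime)
    (hcard : Nat.card (R ⧸ P) = q) (x : R) : τ x - x ∈ P := by
  obtain ⟨k, hk⟩ := P.exists_intCast_sub_mem_of_card_quotient_prime hq hcard x
  have hτk : τ (x - k) ∈ P := hτP ▸ Ideal.mem_map_of_mem _ hk
  simpa [map_sub, map_intCast] using P.sub_mem hτk hk

theorem Ideal.mem_of_span_singleton_eq_pow {R : Type*} [CommRing R] {P : Ideal R} {c : R} {k : ℕ}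
    (hk : k ≠ 0) (hc : Ideal.span {c} = P ^ k) : c ∈ P :=
  Ideal.pow_le_self hk (hc ▸ Ideal.mem_span_singleton_self c)

theorem Ideal.apply_mem_prod_of_span_natCast_eq_pow {R ι : Type*} [CommRing R] (τ : R ≃+* R)
    {P : ι → Ideal R} (hP : ∀ i, (P i).IsPrime) {c : ι → ℕ} {k : ℕ} (hk : k ≠ 0)
    (hc : ∀ i, Ideal.span {(c i : R)} = P i ^ k) (s : Finset ι) {x : R} (hx : x ∈ ∏ i ∈ s, P i) :
    τ x ∈ ∏ i ∈ s, P i := by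
  have hmap : (∏ i ∈ s, P i).map (τ : R →+* R) = ∏ i ∈ s, P i := by
    rw [← Ideal.mapHom_apply, map_prod]
    exact Finset.prod_congr rfl fun i _ =>
      Ideal.map_eq_self_of_span_natCast_eq_pow τ (hP i) hk (hc i)
  exact hmap ▸ Ideal.mem_map_of_mem _ hx

theorem Ideal.natCast_dvd_of_intCast_mem {R : Type*} [CommRing R] {Q : Ideal R} (hQ : Q ≠ ⊤)
    {q : ℕ} (hq : q.Prime) (hqQ : (q : R) ∈ Q) {z : ℤ} (hz : (z : R) ∈ Q) : (q : ℤ) ∣ z := by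
  by_contra hqz
  obtain ⟨u, v, huv⟩ := (Nat.prime_iff_prime_int.mp hq).coprime_iff_not_dvd.mpr hqz
  refine hQ ((Ideal.eq_top_iff_one Q).mpr ?_)
  have : ((u * q + v * z : ℤ) : R) ∈ Q := by
    push_cast
    exact Q.add_mem (Q.mul_mem_left _ hqQ) (Q.mul_mem_left _ hz)
  rwa [huv, Int.cast_one] at this

theorem Ideal.prod_natCast_dvd_of_intCast_mem_prod {R ι : Type*} [CommRing R] {P : ι → Ideal R}
    (hP : ∀ i, P i ≠ ⊤) {p : ι → ℕ} (hp : ∀ i, (p i).Prime) (hpinj : Function.Injective p)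
    (hpP : ∀ i, (p i : R) ∈ P i) (s : Finset ι) {z : ℤ} (hz : (z : R) ∈ ∏ i ∈ s, P i) :
    ((∏ i ∈ s, p i : ℕ) : ℤ) ∣ z := by
  have hcop : (s : Set ι).Pairwise (Function.onFun IsCoprime fun i => (p i : ℤ)) :=
    fun i _ j _ hij => Nat.isCoprime_iff_coprime.mpr
      ((Nat.coprime_primes (hp i) (hp j)).mpr (hpinj.ne hij))
  push_cast
  exact Finset.prod_dvd_of_coprime hcop fun i hi => natCast_dvd_of_intCast_mem (hP i) (hp i)
    (hpP i) (Ideal.prod_le_inf.trans (Finset.inf_le hi) hz)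

theorem Ideal.absNorm_eq_of_span_natCast_eq_pow_finrank {S : Type*} [CommRing S]
    [IsDedekindDomain S] [Module.Free ℤ S] [Module.Finite ℤ S] {P : Ideal S} {c : ℕ}
    (hc : Ideal.span {(c : S)} = P ^ finrank ℤ S) (hS : finrank ℤ S ≠ 0) :
    Ideal.absNorm P = c := by
  have h := Ideal.absNorm_span_natCast (S := S) c
  rw [hc, map_pow] at h
  exact Nat.pow_left_injective hS h

theorem LinearIndependent.eq_top_of_forall_mem {k V ι : Type*} [Field k] [AddCommGroup V]
    [Module k V] [FiniteDimensional k V] [Fintype ι] {v : ι → V} (hv : LinearIndependent k v)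
    (hcard : Fintype.card ι = finrank k V) {W : Submodule k V} (hvW : ∀ i, v i ∈ W) : W = ⊤ := by
  rw [eq_top_iff, ← hv.span_eq_top_of_card_eq_finrank' hcard, Submodule.span_le]
  rintro _ ⟨i, rfl⟩
  exact hvW i

theorem algebraMap_trace_eq_add_add {F K : Type*} [Field F] [Field K] [Algebra F K]
    [FiniteDimensional F K] [IsGalois F K] (hdim : finrank F K = 3) {σ : Gal(K/F)}
    (hσ1 : σ ≠ 1) (hσ3 : σ ^ 3 = 1) (x : K) :
    algebraMap F K (Algebra.trace F K x) = x + σ x + σ (σ x) := by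
  have hσ : orderOf σ = 3 := orderOf_eq_prime hσ3 hσ1
  have hbij : Function.Bijective (fun k : Fin 3 => σ ^ (k : ℕ)) := by
    rw [Fintype.bijective_iff_injective_and_card, Fintype.card_fin, ← Nat.card_eq_fintype_card,
      IsGalois.card_aut_eq_finrank, hdim]
    refine ⟨fun i j hij => Fin.ext ?_, rfl⟩
    exact pow_injOn_Iio_orderOf (by simp [hσ]) (by simp [hσ]) hij
  rw [trace_eq_sum_automorphisms, ← Fintype.sum_bijective _ hbij (fun k => (σ ^ (k : ℕ)) x) _
    (fun _ => rfl), Fin.sum_univ_three]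
  simp [pow_two]

theorem cubicLenSq_coe {K : Type*} [Field K] [NumberField K] (x : 𝓞 K) :
    cubicLenSq K (x : K) = Algebra.trace ℤ (𝓞 K) (x * x) := by
  rw [cubicLenSq, Algebra.coe_trace_int]
  rfl

theorem trace_intCast {K : Type*} [Field K] [NumberField K] (hdim : finrank ℚ K = 3) (k : ℤ) :
    Algebra.trace ℤ (𝓞 K) (k : 𝓞 K) = 3 * k := by
  rw [← eq_intCast (algebraMap ℤ (𝓞 K)), Algebra.trace_algebraMap, RingOfIntegers.rank, hdim,
    nsmul_eq_mul, Nat.cast_ofNat]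

namespace IsMinimalVector

variable {K : Type*} [Field K] [NumberField K] {I : Ideal (𝓞 K)} {v w : 𝓞 K}

theorem trace_mul_self_le (hv : IsMinimalVector K I v) (hw : w ∈ I) (hw0 : w ≠ 0) :
    Algebra.trace ℤ (𝓞 K) (v * v) ≤ Algebra.trace ℤ (𝓞 K) (w * w) := by
  have h := hv.2.2 w hw hw0
  rwa [cubicLenSq_coe, cubicLenSq_coe, Int.cast_le] at h

theorem trace_mul_self_eq (hv : IsMinimalVector K I v) (hw : IsMinimalVector K I w) :
    Algebra.trace ℤ (𝓞 K) (v * v) = Algebra.trace ℤ (𝓞 K) (w * w) :=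
  le_antisymm (hv.trace_mul_self_le hw.1 hw.2.1) (hw.trace_mul_self_le hv.1 hv.2.1)

theorem trace_mul_self_le_of_natCast_mem (hdim : finrank ℚ K = 3) (hv : IsMinimalVector K I v)
    {n : ℕ} (hn : n ≠ 0) (hnI : (n : 𝓞 K) ∈ I) : Algebra.trace ℤ (𝓞 K) (v * v) ≤ 3 * n ^ 2 := by
  have h := hv.trace_mul_self_le hnI (Nat.cast_ne_zero.mpr hn)
  rwa [← Int.cast_natCast, ← Int.cast_mul, trace_intCast hdim, ← sq (n : ℤ)] at h

end IsMinimalVector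

theorem IsWellRounded3.exists_fin_three {K : Type*} [Field K] [NumberField K]
    {I : Ideal (𝓞 K)} (h : IsWellRounded3 K I) :
    ∃ v : Fin 3 → 𝓞 K, (∀ i, IsMinimalVector K I (v i)) ∧
      LinearIndependent ℚ (fun i => (v i : K)) := by
  obtain ⟨v₁, v₂, v₃, h₁, h₂, h₃, hli⟩ := h
  refine ⟨![v₁, v₂, v₃], fun i => by fin_cases i <;> assumption, ?_⟩
  convert hli using 1
  ext i
  fin_cases i <;> rfl

section CyclicCubic

variable {K : Type*} [Field K] [NumberField K] [IsGalois ℚ K] {σ : Gal(K/ℚ)}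

local notation "τ" => galRestrict ℤ ℚ K (𝓞 K) σ
local notation "tr" => Algebra.trace ℤ (𝓞 K)

theorem galRestrict_apply_apply_apply (hσ3 : σ ^ 3 = 1) (x : 𝓞 K) : τ (τ (τ x)) = x := by
  apply RingOfIntegers.ext
  simpa [algebraMap_galRestrict_apply, pow_succ] using congr($hσ3 (x : K))

theorem intCast_trace_eq_add_add (hdim : finrank ℚ K = 3) (hσ1 : σ ≠ 1) (hσ3 : σ ^ 3 = 1)
    (x : 𝓞 K) : (tr x : 𝓞 K) = x + τ x + τ (τ x) := by
  apply RingOfIntegers.ext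
  have h := algebraMap_trace_eq_add_add hdim hσ1 hσ3 (x : K)
  rw [← Algebra.coe_trace_int] at h
  simpa [algebraMap_galRestrict_apply] using h

theorem trace_sq_eq (hdim : finrank ℚ K = 3) (hσ1 : σ ≠ 1) (hσ3 : σ ^ 3 = 1) (x : 𝓞 K) :
    tr x ^ 2 = tr (x * x) + 2 * tr (x * τ x) := by
  have h := congrArg (fun y => tr (x * y)) (intCast_trace_eq_add_add hdim hσ1 hσ3 x)
  have hτ : tr (x * τ (τ x)) = tr (x * τ x) := by
    rw [← Algebra.trace_eq_of_algEquiv τ, map_mul, galRestrict_apply_apply_apply hσ3, mul_comm]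
  simp only [mul_add, map_add, hτ, mul_comm x (tr x : 𝓞 K), ← zsmul_eq_mul, map_zsmul,
    smul_eq_mul] at h
  linear_combination h

theorem trace_sub_galRestrict_mul_self (x : 𝓞 K) :
    tr ((x - τ x) * (x - τ x)) = 2 * tr (x * x) - 2 * tr (x * τ x) := by
  have hτ : tr (τ x * τ x) = tr (x * x) := by
    rw [← map_mul, Algebra.trace_eq_of_algEquiv]
  have h : (x - τ x) * (x - τ x) = x * x - 2 • (x * τ x) + τ x * τ x := by
    rw [two_nsmul]; ring
  rw [h, map_add, map_sub, map_nsmul, hτ]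
  ring

variable {J : Ideal (𝓞 K)} {n : ℕ}

theorem IsMinimalVector.trace_mul_self_eq_of_fixed (hdim : finrank ℚ K = 3) (hσ1 : σ ≠ 1)
    (hσ3 : σ ^ 3 = 1) (hn : n ≠ 0) (hnJ : (n : 𝓞 K) ∈ J)
    (htr : ∀ x ∈ J, (3 * n : ℤ) ∣ tr x) {v : 𝓞 K} (hv : IsMinimalVector K J v) (hfix : τ v = v) :
    tr (v * v) = 3 * n ^ 2 := by
  have ht : (tr v : 𝓞 K) = 3 * v := by
    rw [intCast_trace_eq_add_add hdim hσ1 hσ3, hfix, hfix]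
    ring
  have ht0 : tr v ≠ 0 := by
    intro h
    rw [h, Int.cast_zero, eq_comm, mul_eq_zero] at ht
    exact hv.2.1 (ht.resolve_left (by norm_num))
  have hsq : tr v ^ 2 = 3 * tr (v * v) := by
    rw [trace_sq_eq hdim hσ1 hσ3, hfix]
    ring
  have hlow := Int.sq_le_sq_of_dvd (htr v hv.1) ht0
  have hup := hv.trace_mul_self_le_of_natCast_mem hdim hn hnJ
  linarith

theorem IsMinimalVector.trace_eq_zero_of_not_fixed (hdim : finrank ℚ K = 3) (hσ1 : σ ≠ 1)
    (hσ3 : σ ^ 3 = 1) (hn : n ≠ 0) (hnJ : (n : 𝓞 K) ∈ J) (hJσ : ∀ x ∈ J, τ x ∈ J)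
    (htr : ∀ x ∈ J, (3 * n : ℤ) ∣ tr x) {v : 𝓞 K} (hv : IsMinimalVector K J v) (hfix : τ v ≠ v) :
    tr v = 0 ∧ tr (v * v) = -2 * tr (v * τ v) := by
  have hsub : tr (v * v) ≤ 2 * tr (v * v) - 2 * tr (v * τ v) := by
    rw [← trace_sub_galRestrict_mul_self]
    exact hv.trace_mul_self_le (J.sub_mem hv.1 (hJσ v hv.1)) (sub_ne_zero.mpr hfix.symm)
  have hsq := trace_sq_eq hdim hσ1 hσ3 v
  have hup := hv.trace_mul_self_le_of_natCast_mem hdim hn hnJ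
  have ht : tr v = 0 := by
    by_contra ht0
    have hlow := Int.sq_le_sq_of_dvd (htr v hv.1) ht0
    have hnpos : (0 : ℤ) < n ^ 2 := by positivity
    linarith
  exact ⟨ht, by rw [ht] at hsq; linarith⟩

theorem not_isWellRounded3_of_three_mul_dvd_trace (hdim : finrank ℚ K = 3) (hσ1 : σ ≠ 1)
    (hσ3 : σ ^ 3 = 1) (hn : Odd n) (hnJ : (n : 𝓞 K) ∈ J) (hJσ : ∀ x ∈ J, τ x ∈ J)
    (htr : ∀ x ∈ J, (3 * n : ℤ) ∣ tr x) : ¬ IsWellRounded3 K J := by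
  intro hJ
  obtain ⟨v, hmin, hli⟩ := hJ.exists_fin_three
  have hn0 : n ≠ 0 := hn.pos.ne'
  have hcard : Fintype.card (Fin 3) = finrank ℚ K := by rw [Fintype.card_fin, hdim]
  have hcases : (∀ i, τ (v i) = v i) ∨ ∀ i, τ (v i) ≠ v i := by
    by_contra! h
    obtain ⟨⟨i, hi⟩, j, hj⟩ := h
    have hodd := (hmin j).trace_mul_self_eq_of_fixed hdim hσ1 hσ3 hn0 hnJ htr hj
    have heven := ((hmin i).trace_eq_zero_of_not_fixed hdim hσ1 hσ3 hn0 hnJ hJσ htr hi).2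
    rw [(hmin i).trace_mul_self_eq (hmin j), hodd] at heven
    have : Odd (3 * (n : ℤ) ^ 2) := (by decide : Odd (3 : ℤ)).mul (hn.natCast.pow)
    exact Int.not_even_iff_odd.mpr this ⟨-tr (v i * τ (v i)), by rw [heven]; ring⟩
  rcases hcases with hfix | hmove
  · refine hσ1 (AlgEquiv.ext fun x => ?_)
    have hW := hli.eq_top_of_forall_mem hcard
      (W := LinearMap.ker (σ.toLinearMap - LinearMap.id)) fun i => by
        simp [← algebraMap_galRestrict_apply ℤ, hfix i]
    simpa [sub_eq_zero] using LinearMap.congr_fun (LinearMap.ker_eq_top.mp hW) x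
  · have hW := hli.eq_top_of_forall_mem hcard (W := LinearMap.ker (Algebra.trace ℚ K)) fun i => by
      rw [LinearMap.mem_ker, ← Algebra.coe_trace_int, Int.cast_eq_zero]
      exact ((hmin i).trace_eq_zero_of_not_fixed hdim hσ1 hσ3 hn0 hnJ hJσ htr (hmove i)).1
    have h1 := LinearMap.congr_fun (LinearMap.ker_eq_top.mp hW) 1
    rw [← map_one (algebraMap ℚ K), Algebra.trace_algebraMap, hdim] at h1
    norm_num at h1

theorem three_dvd_trace (hdim : finrank ℚ K = 3) (hσ1 : σ ≠ 1) (hσ3 : σ ^ 3 = 1)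
    {P₀ : Ideal (𝓞 K)} (hP₀ : P₀.IsPrime) (hram : Ideal.span {(3 : 𝓞 K)} = P₀ ^ 3) (x : 𝓞 K) :
    (3 : ℤ) ∣ tr x := by
  have hrank : finrank ℤ (𝓞 K) = 3 := by rw [RingOfIntegers.rank, hdim]
  have hcard : Nat.card (𝓞 K ⧸ P₀) = 3 := by
    rw [← Submodule.cardQuot_apply, ← Ideal.absNorm_apply,
      Ideal.absNorm_eq_of_span_natCast_eq_pow_finrank (by rw [hrank]; exact_mod_cast hram)
        (by rw [hrank]; norm_num)]
  have hfix := Ideal.map_eq_self_of_span_natCast_eq_pow (τ : 𝓞 K ≃+* 𝓞 K) hP₀ three_ne_zero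
    (c := 3) (by exact_mod_cast hram)
  have hres := Ideal.apply_sub_mem_of_card_quotient_prime _ hfix Nat.prime_three hcard
  have h3 : (3 : 𝓞 K) ∈ P₀ := Ideal.mem_of_span_singleton_eq_pow three_ne_zero hram
  have htr : (tr x : 𝓞 K) ∈ P₀ := by
    rw [intCast_trace_eq_add_add hdim hσ1 hσ3,
      show x + τ x + τ (τ x) = 3 * x + 2 * (τ x - x) + (τ (τ x) - τ x) by ring]
    exact add_mem (add_mem (P₀.mul_mem_right x h3) (P₀.mul_mem_left 2 (hres x))) (hres (τ x))
  exact_mod_cast Ideal.natCast_dvd_of_intCast_mem hP₀.ne_top Nat.prime_three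
    (by exact_mod_cast h3) htr

end CyclicCubic

theorem statement3_general
    (K : Type) [Field K] [NumberField K] [IsGalois ℚ K]
    (hdim : Module.finrank ℚ K = 3)
    (σ : K ≃ₐ[ℚ] K) (hσ1 : σ ≠ 1) (hσ3 : σ ^ 3 = 1)
    (r : ℕ) (p : Fin r → ℕ) (hpprime : ∀ i, Nat.Prime (p i))
    (hpmod : ∀ i, p i % 3 = 1) (hpinj : Function.Injective p)
    (P₀ : Ideal (𝓞 K)) (hP₀prime : P₀.IsPrime)
    (hP₀ram : Ideal.span {(3 : 𝓞 K)} = P₀ ^ 3)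
    (P : Fin r → Ideal (𝓞 K)) (hPprime : ∀ i, (P i).IsPrime)
    (hPram : ∀ i, Ideal.span {(p i : 𝓞 K)} = P i ^ 3)
    (I : Finset (Fin r)) :
    ¬ IsWellRounded3 K (∏ i ∈ I, P i) := by
  set τ := galRestrict ℤ ℚ K (𝓞 K) σ
  have hp3 : ∀ i, p i ≠ 3 := fun i h => by simpa [h] using hpmod i
  have hpodd : ∀ i, Odd (p i) := fun i =>
    (hpprime i).odd_of_ne_two fun h => by simpa [h] using hpmod i
  have hpP : ∀ i, (p i : 𝓞 K) ∈ P i := fun i =>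
    Ideal.mem_of_span_singleton_eq_pow three_ne_zero (hPram i)
  have hn : Odd (∏ i ∈ I, p i) := Finset.prod_induction _ Odd (fun _ _ => Odd.mul) odd_one
    fun i _ => hpodd i
  have hcop : IsCoprime (3 : ℤ) (∏ i ∈ I, p i : ℕ) := Nat.isCoprime_iff_coprime.mpr
    (Nat.Coprime.prod_right fun i _ =>
      (Nat.coprime_primes Nat.prime_three (hpprime i)).mpr (hp3 i).symm)
  have hnJ : ((∏ i ∈ I, p i : ℕ) : 𝓞 K) ∈ ∏ i ∈ I, P i := by
    rw [Nat.cast_prod]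
    exact Ideal.prod_mem_prod fun i _ => hpP i
  have hJσ : ∀ x ∈ ∏ i ∈ I, P i, τ x ∈ ∏ i ∈ I, P i := fun x hx =>
    Ideal.apply_mem_prod_of_span_natCast_eq_pow (τ : 𝓞 K ≃+* 𝓞 K) hPprime three_ne_zero hPram I hx
  have htrJ : ∀ x ∈ ∏ i ∈ I, P i, (Algebra.trace ℤ (𝓞 K) x : 𝓞 K) ∈ ∏ i ∈ I, P i := fun x hx => by
    rw [intCast_trace_eq_add_add hdim hσ1 hσ3]
    exact add_mem (add_mem hx (hJσ x hx)) (hJσ _ (hJσ x hx))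
  refine not_isWellRounded3_of_three_mul_dvd_trace hdim hσ1 hσ3 hn hnJ hJσ fun x hx =>
    hcop.mul_dvd (three_dvd_trace hdim hσ1 hσ3 hP₀prime hP₀ram x) ?_
  exact Ideal.prod_natCast_dvd_of_intCast_mem_prod (fun i => (hPprime i).ne_top) hpprime hpinj
    hpP I (htrJ x hx)

/-- With `F` the cyclic cubic field of conductor `m = 9p₁⋯p_r`
(`r ≥ 1`) from the Hasse parametrization, for every nonempty `I ⊆ {1, …, r}` the
ideal `P_I = ∏_{i∈I} Pᵢ` is not well-rounded. -/
theorem statement3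
    (K : Type) [Field K] [NumberField K] [IsGalois ℚ K]
    (hdim : Module.finrank ℚ K = 3)
    (σ : K ≃ₐ[ℚ] K) (hσ1 : σ ≠ 1) (hσ3 : σ ^ 3 = 1)
    (r : ℕ) (p : Fin r → ℕ) (hpprime : ∀ i, Nat.Prime (p i))
    (hpmod : ∀ i, p i % 3 = 1) (hpinj : Function.Injective p)
    (m : ℕ) (hm : m = 9 * ∏ i, p i)
    (a b : ℤ) (ha : a % 9 = 6) (hb : b % 9 = 3 ∨ b % 9 = 6) (hbpos : 0 < b)
    (hab : 4 * (m : ℤ) = a ^ 2 + 3 * b ^ 2)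
    (α : K) (hgen : Algebra.adjoin ℚ {α} = ⊤)
    (hα : 27 * α ^ 3 - 9 * (m : K) * α - (a : K) * (m : K) = 0)
    (P₀ : Ideal (𝓞 K)) (hP₀prime : P₀.IsPrime)
    (hP₀ram : Ideal.span {(3 : 𝓞 K)} = P₀ ^ 3)
    (P : Fin r → Ideal (𝓞 K)) (hPprime : ∀ i, (P i).IsPrime)
    (hPram : ∀ i, Ideal.span {(p i : 𝓞 K)} = P i ^ 3)
    (hr : 1 ≤ r)
    (I : Finset (Fin r)) (hI : I.Nonempty) :
    ¬ IsWellRounded3 K (∏ i ∈ I, P i) :=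
  statement3_general K hdim σ hσ1 hσ3 r p hpprime hpmod hpinj P₀ hP₀prime hP₀ram P hPprime hPram I
end

section
/- Let p be a prime divisor of m and write p = 3n + 1 with n a positive integer. Then pO_F = P³, where P is the unique prime ideal of O_F above p, and P is generated by p and α + n. Moreover, −α + σ(α) ∈ P, Tr_{F/ℚ}((−α + σ(α))²) = 2m, and Tr_{F/ℚ}((α + n)²) = (2m + p²)/3. -/
/-!
Write `q = 3n + 1`, `m = q m'` and `x = α + n`. Substituting into the cubic gives
`27 x³ = q w` with `w ≡ m' a (mod q, x)`; since `q ∤ 27 m' a` (squarefreeness of `m` and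
`4m = a² + 3b²`), `(q, x)³ = (q) · (q², q x, x², w / 27) = (q)`. Then `(q, x)` has norm `q`,
hence is prime, and it is the only prime above `q`. As `σ α` is a root as well,
`(q, σ α + n) = (q, α + n)`, which puts `σ α - α` in `P`. The traces follow from
`Tr y = y + σ y + σ² y` and Vieta's formulas for the three conjugates of `α`.
-/

open NumberField Module

theorem squarefree_prod_of_injective {ι : Type*} [Fintype ι] {p : ι → ℕ}
    (hp : ∀ i, (p i).Prime) (hinj : Function.Injective p) : Squarefree (∏ i, p i) :=
  Finset.squarefree_prod_of_pairwise_isCoprime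
    (fun i _ j _ hij => Nat.coprime_iff_isRelPrime.mp
      ((Nat.coprime_primes (hp i) (hp j)).mpr (hinj.ne hij)))
    fun i _ => (hp i).squarefree

theorem isCoprime_mul_of_four_mul_eq_sq_add_three_mul_sq {q m : ℕ} {a b : ℤ} (hq : q.Prime)
    (hq3 : 3 < q) (hsq : Squarefree (q * m)) (hab : 4 * ((q * m : ℕ) : ℤ) = a ^ 2 + 3 * b ^ 2) :
    IsCoprime (q : ℤ) (m * a) := by
  have hqZ : Prime (q : ℤ) := Nat.prime_iff_prime_int.mp hq
  have hsmall : ∀ k : ℕ, 0 < k → k < q → ¬ (q : ℤ) ∣ k := fun k hk hkq h =>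
    absurd (Nat.le_of_dvd hk (Int.natCast_dvd_natCast.mp h)) (by omega)
  have hm : ¬ (q : ℤ) ∣ m := Int.natCast_dvd_natCast.not.mpr
    (hq.coprime_iff_not_dvd.mp (Nat.squarefree_mul_iff.mp hsq).1)
  refine hqZ.coprime_iff_not_dvd.mpr fun hma => (hqZ.dvd_mul.mp hma).elim hm ?_
  rintro ⟨a, rfl⟩
  push_cast at hab
  have hb : (q : ℤ) ∣ b := by
    have h3b : (q : ℤ) ∣ 3 * b ^ 2 := ⟨4 * m - q * a ^ 2, by linear_combination -hab⟩
    exact hqZ.dvd_of_dvd_pow ((hqZ.dvd_mul.mp h3b).resolve_left (hsmall 3 three_pos hq3))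
  obtain ⟨b, rfl⟩ := hb
  have h4m : (q : ℤ) ∣ 2 * (2 * m) :=
    ⟨a ^ 2 + 3 * b ^ 2, mul_left_cancel₀ hqZ.ne_zero (by linear_combination hab)⟩
  have h2 := hsmall 2 two_pos (by omega)
  exact hm (((hqZ.dvd_mul.mp h4m).resolve_left h2 |> hqZ.dvd_mul.mp).resolve_left h2)

theorem isCoprime_twentySeven_three_mul_add_one (n : ℕ) :
    IsCoprime (27 : ℤ) (3 * n + 1 : ℕ) := by
  rw [show (27 : ℤ) = (3 ^ 3 : ℕ) by norm_num, Nat.isCoprime_iff_coprime]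
  exact Nat.Coprime.pow_left 3 (by simp)

theorem exists_eq_mul_of_isCoprime {R : Type*} [CommRing R] {c d y w : R} (h : IsCoprime c d)
    (hyw : c * y = d * w) : ∃ z, y = d * z ∧ w = c * z := by
  obtain ⟨u, v, huv⟩ := h
  exact ⟨u * w + v * y, by linear_combination u * hyw - y * huv,
    by linear_combination -v * hyw - w * huv⟩

theorem cubic_vieta_of_distinct_roots {R : Type*} [CommRing R] [IsDomain R]
    {c₃ c₂ c₁ c₀ x y z : R} (hxy : x ≠ y) (hxz : x ≠ z) (hyz : y ≠ z)
    (hx : c₃ * x ^ 3 + c₂ * x ^ 2 + c₁ * x + c₀ = 0)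
    (hy : c₃ * y ^ 3 + c₂ * y ^ 2 + c₁ * y + c₀ = 0)
    (hz : c₃ * z ^ 3 + c₂ * z ^ 2 + c₁ * z + c₀ = 0) :
    c₃ * (x + y + z) = -c₂ ∧ c₃ * (x * y + y * z + z * x) = c₁ := by
  have hExy : c₃ * (x ^ 2 + x * y + y ^ 2) + c₂ * (x + y) + c₁ = 0 :=
    (mul_eq_zero.mp (by linear_combination hx - hy : (x - y) * _ = 0)).resolve_left
      (sub_ne_zero.mpr hxy)
  have hExz : c₃ * (x ^ 2 + x * z + z ^ 2) + c₂ * (x + z) + c₁ = 0 :=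
    (mul_eq_zero.mp (by linear_combination hx - hz : (x - z) * _ = 0)).resolve_left
      (sub_ne_zero.mpr hxz)
  have hsum : c₃ * (x + y + z) + c₂ = 0 :=
    (mul_eq_zero.mp (by linear_combination hExy - hExz : (y - z) * _ = 0)).resolve_left
      (sub_ne_zero.mpr hyz)
  exact ⟨by linear_combination hsum, by linear_combination (x + y) * hsum - hExy⟩

theorem Ideal.span_pair_pow_three_eq_span_singleton {R : Type*} [CommRing R] {q x w : R}
    (hx : x ^ 3 = q * w) (hcop : Ideal.span {q, x, w} = ⊤) :
    Ideal.span {q, x} ^ 3 = Ideal.span {q} := by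
  set Q := Ideal.span {q}
  set X := Ideal.span {x}
  set W := Ideal.span {w}
  have hX3 : X ^ 3 = Q * W := by
    rw [Ideal.span_singleton_pow, hx, Ideal.span_singleton_mul_span_singleton]
  have hJ : Q ^ 2 + 3 * Q * X + 3 * X ^ 2 + W = ⊤ := by
    rw [← Ideal.radical_eq_top, eq_top_iff, ← hcop, Ideal.span_le]
    simp only [Ideal.ofNat_eq_top, Ideal.top_mul, Ideal.add_eq_sup, Set.insert_subset_iff,
      Set.singleton_subset_iff, SetLike.mem_coe]
    refine ⟨⟨2, ?_⟩, ⟨2, ?_⟩, Ideal.le_radical ?_⟩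
    · exact Ideal.mem_sup_left <| Ideal.mem_sup_left <| Ideal.mem_sup_left <|
        Ideal.pow_mem_pow (Ideal.mem_span_singleton_self q) 2
    · exact Ideal.mem_sup_left <| Ideal.mem_sup_right <|
        Ideal.pow_mem_pow (Ideal.mem_span_singleton_self x) 2
    · exact Ideal.mem_sup_right (Ideal.mem_span_singleton_self w)
  calc Ideal.span {q, x} ^ 3 = (Q + X) ^ 3 := by
        rw [Ideal.span_insert, Ideal.add_eq_sup]
    _ = Q * (Q ^ 2 + 3 * Q * X + 3 * X ^ 2) + X ^ 3 := by ring
    _ = Q := by rw [hX3, ← mul_add, hJ, Ideal.mul_top]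

/-- `27` times the paper's defining polynomial of `α`, so that it has integer coefficients. -/
def hasseCubic {R : Type*} [CommRing R] (m : ℕ) (a : ℤ) (x : R) : R :=
  27 * x ^ 3 - 27 * x ^ 2 + 9 * (1 - (m : R)) * x - ((m : R) * ((a : R) - 3) + 1)

theorem map_hasseCubic {F R S : Type*} [CommRing R] [CommRing S] [FunLike F R S]
    [RingHomClass F R S] (f : F) (m : ℕ) (a : ℤ) (x : R) :
    f (hasseCubic m a x) = hasseCubic m a (f x) := by
  simp [hasseCubic, map_ofNat f]

theorem span_pow_three_of_hasseCubic_eq_zero {R : Type*} [CommRing R] {β : R} {q n m' : ℕ}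
    {a : ℤ} (hqn : q = 3 * n + 1) (hma : IsCoprime (q : ℤ) (m' * a))
    (hβ : hasseCubic (q * m') a β = 0) :
    Ideal.span {(q : R), β + n} ^ 3 = Ideal.span {(q : R)} := by
  have hqR : (q : R) = 3 * n + 1 := by rw [hqn]; push_cast; ring
  have hkey : 27 * (β + n) ^ 3 = q * (27 * β ^ 2 + (27 * n - 9 + 9 * m') * β
      + (m' * (a - 3) + 9 * n ^ 2 - 3 * n + 1)) := by
    unfold hasseCubic at hβ
    push_cast at hβ
    rw [hqR] at hβ ⊢
    linear_combination hβ
  obtain ⟨z, hxz, hwz⟩ :=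
    exists_eq_mul_of_isCoprime (by
      simpa [hqn] using (isCoprime_twentySeven_three_mul_add_one n).map (Int.castRingHom R)) hkey
  refine Ideal.span_pair_pow_three_eq_span_singleton hxz ?_
  obtain ⟨s, t, hst⟩ : IsCoprime (q : R) (m' * a) := by simpa using hma.map (Int.castRingHom R)
  have h1 : (1 : R) = (s + t * (3 * m' - q)) * q + t * (9 - 9 * m' - 27 * β) * (β + n)
      + 27 * t * z := by
    rw [hqR] at hst ⊢
    linear_combination -hst + t * hwz
  rw [Ideal.eq_top_iff_one, h1]
  refine add_mem (add_mem ?_ ?_) ?_ <;>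
    exact Ideal.mul_mem_left _ _ (Ideal.subset_span (by simp))

section RingOfIntegers

variable {K : Type*} [Field K] [NumberField K]

theorem Ideal.isPrime_of_pow_finrank_eq_span_natCast {q : ℕ} (hq : q.Prime) {P : Ideal (𝓞 K)}
    (hP : P ^ finrank ℚ K = Ideal.span {(q : 𝓞 K)}) : P.IsPrime := by
  have hnorm : Ideal.absNorm P ^ finrank ℚ K = q ^ finrank ℚ K := by
    rw [← map_pow, hP, Ideal.absNorm_span_natCast, RingOfIntegers.rank]
  exact Ideal.isPrime_of_irreducible_absNorm (Nat.pow_left_injective finrank_pos.ne' hnorm ▸ hq)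

theorem Ideal.eq_of_pow_finrank_eq_span_natCast {q : ℕ} (hq : q.Prime) {P : Ideal (𝓞 K)}
    (hP : P ^ finrank ℚ K = Ideal.span {(q : 𝓞 K)}) {Q : Ideal (𝓞 K)} (hQ : Q.IsPrime)
    (hqQ : (q : 𝓞 K) ∈ Q) : Q = P := by
  have hPprime := Ideal.isPrime_of_pow_finrank_eq_span_natCast hq hP
  have hPbot : P ≠ ⊥ := by
    rintro rfl
    rw [Ideal.zero_eq_bot.symm, zero_pow finrank_pos.ne', Ideal.zero_eq_bot, eq_comm,
      Ideal.span_singleton_eq_bot] at hP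
    exact hq.ne_zero (by exact_mod_cast hP)
  have hle : P ^ finrank ℚ K ≤ Q := hP ▸ (Ideal.span_singleton_le_iff_mem Q).mpr hqQ
  exact ((hPprime.isMaximal hPbot).eq_of_le hQ.ne_top (hQ.le_of_pow_le hle)).symm

end RingOfIntegers

section CyclicCubic

variable {F K : Type*} [Field F] [Field K] [Algebra F K] [FiniteDimensional F K] [IsGalois F K]

theorem pow_three_eq_one_of_finrank_eq_three (h : finrank F K = 3) (σ : K ≃ₐ[F] K) :
    σ ^ 3 = 1 := by
  rw [← h, ← IsGalois.card_aut_eq_finrank]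
  exact pow_card_eq_one'

theorem orderOf_eq_three_of_finrank_eq_three (h : finrank F K = 3) {σ : K ≃ₐ[F] K}
    (hσ : σ ≠ 1) : orderOf σ = 3 :=
  have : Fact (Nat.Prime 3) := ⟨Nat.prime_three⟩
  orderOf_eq_prime (pow_three_eq_one_of_finrank_eq_three h σ) hσ

theorem apply_apply_apply_eq_of_finrank_eq_three (h : finrank F K = 3) (σ : K ≃ₐ[F] K)
    (y : K) : σ (σ (σ y)) = y := by
  simpa [pow_succ, AlgEquiv.mul_apply] using
    DFunLike.congr_fun (pow_three_eq_one_of_finrank_eq_three h σ) y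

theorem algebraMap_trace_eq_of_finrank_eq_three (h : finrank F K = 3) {σ : K ≃ₐ[F] K}
    (hσ : σ ≠ 1) (y : K) : algebraMap F K (Algebra.trace F K y) = y + σ y + σ (σ y) := by
  have hord := orderOf_eq_three_of_finrank_eq_three h hσ
  have hbij : Function.Bijective fun i : Fin 3 => σ ^ (i : ℕ) := by
    refine (Fintype.bijective_iff_injective_and_card _).mpr ⟨fun i j hij => ?_, ?_⟩
    · exact Fin.ext (pow_injOn_Iio_orderOf (by simp [hord]) (by simp [hord]) hij)
    · rw [Fintype.card_fin, ← Nat.card_eq_fintype_card, IsGalois.card_aut_eq_finrank, h]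
  rw [trace_eq_sum_automorphisms, ← Fintype.sum_bijective _ hbij _ _ fun _ => rfl,
    Fin.sum_univ_three]
  simp [pow_two, AlgEquiv.mul_apply]

end CyclicCubic

section HasseTraces

variable {K : Type*} [Field K] [NumberField K] [IsGalois ℚ K] {σ : K ≃ₐ[ℚ] K} {α : K}
  {m : ℕ} {a : ℤ}

theorem esymm_conj_of_hasseCubic (hdim : finrank ℚ K = 3) (hσ : σ ≠ 1)
    (hgen : Algebra.adjoin ℚ {α} = ⊤) (hα : hasseCubic m a α = 0) :
    α + σ α + σ (σ α) = 1 ∧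
      3 * (α * σ α + σ α * σ (σ α) + σ (σ α) * α) = 1 - m := by
  have hfix : ∀ τ : K ≃ₐ[ℚ] K, τ ≠ 1 → τ α ≠ α := fun τ hτ hτα =>
    hτ (AlgEquiv.coe_toAlgHom_injective (AlgHom.ext_of_adjoin_eq_top hgen (by simpa using hτα)))
  have hσ2 : σ ^ 2 ≠ 1 :=
    pow_ne_one_of_lt_orderOf two_ne_zero
      (by rw [orderOf_eq_three_of_finrank_eq_three hdim hσ]; norm_num)
  have hroot : ∀ τ : K ≃ₐ[ℚ] K, 27 * τ α ^ 3 + -27 * τ α ^ 2 + 9 * (1 - m) * τ α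
      + -(m * (a - 3) + 1) = 0 := fun τ => by
    have h := congrArg τ hα
    rw [map_hasseCubic, map_zero] at h
    unfold hasseCubic at h
    linear_combination h
  obtain ⟨he1, he2⟩ := cubic_vieta_of_distinct_roots (hfix σ hσ).symm
    (by simpa [pow_two] using (hfix _ hσ2).symm) (fun h => hfix σ hσ (σ.injective h).symm)
    (hroot 1) (hroot σ) (hroot (σ * σ))
  exact ⟨by linear_combination he1 / 27, by linear_combination he2 / 9⟩

theorem trace_sq_neg_add_conj_of_hasseCubic (hdim : finrank ℚ K = 3) (hσ : σ ≠ 1)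
    (hgen : Algebra.adjoin ℚ {α} = ⊤) (hα : hasseCubic m a α = 0) :
    Algebra.trace ℚ K ((-α + σ α) ^ 2) = 2 * m := by
  obtain ⟨he1, he2⟩ := esymm_conj_of_hasseCubic hdim hσ hgen hα
  apply (algebraMap ℚ K).injective
  rw [algebraMap_trace_eq_of_finrank_eq_three hdim hσ]
  simp only [map_pow, map_add, map_neg, map_mul, map_ofNat, map_natCast,
    apply_apply_apply_eq_of_finrank_eq_three hdim]
  linear_combination (2 * (α + σ α + σ (σ α) + 1)) * he1 - 2 * he2

theorem trace_sq_add_natCast_of_hasseCubic (hdim : finrank ℚ K = 3) (hσ : σ ≠ 1)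
    (hgen : Algebra.adjoin ℚ {α} = ⊤) (hα : hasseCubic m a α = 0) (n : ℕ) :
    Algebra.trace ℚ K ((α + n) ^ 2) = (2 * m + (3 * n + 1) ^ 2) / 3 := by
  obtain ⟨he1, he2⟩ := esymm_conj_of_hasseCubic hdim hσ hgen hα
  apply (algebraMap ℚ K).injective
  rw [algebraMap_trace_eq_of_finrank_eq_three hdim hσ]
  simp only [map_pow, map_add, map_mul, map_div₀, map_ofNat, map_natCast, map_one]
  linear_combination (α + σ α + σ (σ α) + 1 + 2 * n) * he1 - 2 / 3 * he2

end HasseTraces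

theorem statement8_general
    (K : Type) [Field K] [NumberField K] [IsGalois ℚ K]
    (hdim : Module.finrank ℚ K = 3)
    (σ : K ≃ₐ[ℚ] K) (hσ1 : σ ≠ 1)
    (r : ℕ)
    (p : Fin r → ℕ) (hpprime : ∀ i, Nat.Prime (p i))
    (hpinj : Function.Injective p)
    (m : ℕ) (hm : m = ∏ i, p i)
    (a b : ℤ)
    (hab : 4 * (m : ℤ) = a ^ 2 + 3 * b ^ 2)
    (α : K) (hgen : Algebra.adjoin ℚ {α} = ⊤)
    (hα : 27 * α ^ 3 - 27 * α ^ 2 + 9 * (1 - (m : K)) * α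
        - ((m : K) * ((a : K) - 3) + 1) = 0)
    (αi : 𝓞 K) (hαi : (αi : K) = α)
    (σαi : 𝓞 K) (hσαi : (σαi : K) = σ α)
    (q : ℕ) (hq : Nat.Prime q) (hqm : q ∣ m)
    (n : ℕ) (hqn : q = 3 * n + 1) :
    ∃ P : Ideal (𝓞 K), P.IsPrime ∧
      Ideal.span {(q : 𝓞 K)} = P ^ 3 ∧
      (∀ Q : Ideal (𝓞 K), Q.IsPrime → (q : 𝓞 K) ∈ Q → Q = P) ∧
      P = Ideal.span {(q : 𝓞 K), αi + (n : 𝓞 K)} ∧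
      -αi + σαi ∈ P ∧
      Algebra.trace ℚ K ((-α + σ α) ^ 2) = 2 * (m : ℚ) ∧
      Algebra.trace ℚ K ((α + (n : K)) ^ 2) = (2 * (m : ℚ) + (q : ℚ) ^ 2) / 3 := by
  obtain ⟨m', rfl⟩ := hqm
  have hma : IsCoprime (q : ℤ) (m' * a) :=
    isCoprime_mul_of_four_mul_eq_sq_add_three_mul_sq hq (by have := hq.two_le; omega)
      (hm ▸ squarefree_prod_of_injective hpprime hpinj) hab
  have hα' : hasseCubic (q * m') a α = 0 := hα
  have hσα : hasseCubic (q * m') a (σ α) = 0 := by rw [← map_hasseCubic, hα', map_zero]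
  have hP : ∀ β : 𝓞 K, hasseCubic (q * m') a (β : K) = 0 →
      Ideal.span {(q : 𝓞 K), β + (n : 𝓞 K)} ^ finrank ℚ K = Ideal.span {(q : 𝓞 K)} :=
    fun β hβ => hdim ▸ span_pow_three_of_hasseCubic_eq_zero hqn hma
      (RingOfIntegers.coe_injective (by rw [map_hasseCubic, map_zero]; exact hβ))
  set P := Ideal.span {(q : 𝓞 K), αi + (n : 𝓞 K)}
  have hPα := hP αi (hαi ▸ hα')
  have hσP : Ideal.span {(q : 𝓞 K), σαi + (n : 𝓞 K)} = P :=
    Ideal.eq_of_pow_finrank_eq_span_natCast hq hPα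
      (Ideal.isPrime_of_pow_finrank_eq_span_natCast hq (hP σαi (hσαi ▸ hσα)))
      (Ideal.subset_span (by simp))
  refine ⟨P, Ideal.isPrime_of_pow_finrank_eq_span_natCast hq hPα, (hdim ▸ hPα).symm,
    fun Q hQ hqQ => Ideal.eq_of_pow_finrank_eq_span_natCast hq hPα hQ hqQ, rfl, ?_,
    trace_sq_neg_add_conj_of_hasseCubic hdim hσ1 hgen hα', ?_⟩
  · have hσαP : σαi + (n : 𝓞 K) ∈ P := hσP ▸ Ideal.subset_span (by simp)
    convert sub_mem hσαP (Ideal.subset_span (by simp) : αi + (n : 𝓞 K) ∈ P) using 1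
    ring
  · rw [trace_sq_add_natCast_of_hasseCubic hdim hσ1 hgen hα', hqn]
    push_cast
    ring

/-- With `F` the cyclic cubic field of conductor `m = p₁⋯p_r`
(`pᵢ ≡ 1 mod 3` distinct primes) from the Hasse parametrization, let `q = 3n + 1` be a
prime divisor of `m`.  Then `qO_F = P³` where `P` is the unique prime ideal above `q`,
`P = ⟨q, α + n⟩`, `−α + σ(α) ∈ P`, `Tr((−α+σα)²) = 2m` and
`Tr((α+n)²) = (2m + q²)/3`. -/
theorem statement8
    (K : Type) [Field K] [NumberField K] [IsGalois ℚ K]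
    (hdim : Module.finrank ℚ K = 3)
    (σ : K ≃ₐ[ℚ] K) (hσ1 : σ ≠ 1) (hσ3 : σ ^ 3 = 1)
    (r : ℕ) (hr : 1 ≤ r)
    (p : Fin r → ℕ) (hpprime : ∀ i, Nat.Prime (p i))
    (hpmod : ∀ i, p i % 3 = 1) (hpinj : Function.Injective p)
    (m : ℕ) (hm : m = ∏ i, p i)
    (a b : ℤ) (ha : a % 3 = 2) (hb : b % 3 = 0) (hbpos : 0 < b)
    (hab : 4 * (m : ℤ) = a ^ 2 + 3 * b ^ 2)
    (α : K) (hgen : Algebra.adjoin ℚ {α} = ⊤)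
    (hα : 27 * α ^ 3 - 27 * α ^ 2 + 9 * (1 - (m : K)) * α
        - ((m : K) * ((a : K) - 3) + 1) = 0)
    (αi : 𝓞 K) (hαi : (αi : K) = α)
    (σαi : 𝓞 K) (hσαi : (σαi : K) = σ α)
    (q : ℕ) (hq : Nat.Prime q) (hqm : q ∣ m)
    (n : ℕ) (hn : 0 < n) (hqn : q = 3 * n + 1) :
    ∃ P : Ideal (𝓞 K), P.IsPrime ∧
      Ideal.span {(q : 𝓞 K)} = P ^ 3 ∧
      (∀ Q : Ideal (𝓞 K), Q.IsPrime → (q : 𝓞 K) ∈ Q → Q = P) ∧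
      P = Ideal.span {(q : 𝓞 K), αi + (n : 𝓞 K)} ∧
      -αi + σαi ∈ P ∧
      Algebra.trace ℚ K ((-α + σ α) ^ 2) = 2 * (m : ℚ) ∧
      Algebra.trace ℚ K ((α + (n : K)) ^ 2) = (2 * (m : ℚ) + (q : ℚ) ^ 2) / 3 :=
  statement8_general K hdim σ hσ1 r p hpprime hpinj m hm a b hab α hgen hα αi hαi σαi hσαi q hq hqm
    n hqn
end

section
/- There exist integers A and B such that A² − AB + B² = m/9 and α² = 2m/9 + Aα + Bσ(α). -/
/-!
Write `β = σ α`; it is a second root of the monic cubic `X³ + pX + q` with `p = -m/3`,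
`q = -am/27`, so `α² + αβ + β² = -p` and, the third root being `-α - β`, the square root of
the discriminant `-4p³ - 27q² = (mb/3)²` is `D = (α - β)(2α + β)(α + 2β)`. Eliminating `p`
and `q` gives the identity `6pα² = -4p² + (9q - D)α - 2Dβ`, i.e.
`α² = 2m/9 + Aα + Bβ` with `B = D/m = ±b/3` and `a = 6A - 3B`. These are integers because
`4m = a² + 3b²` forces `a ≡ b (mod 2)`, and `9(A² - AB + B²) = (a² + 3b²)/4 = m`.
-/

section CubicRoots

variable {R : Type*} [CommRing R] {p q x y : R}

theorem sq_add_mul_add_sq_of_cubic_roots [IsDomain R] (hx : x ^ 3 + p * x + q = 0)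
    (hy : y ^ 3 + p * y + q = 0) (hxy : x ≠ y) : x ^ 2 + x * y + y ^ 2 = -p := by
  have h : (x - y) * (x ^ 2 + x * y + y ^ 2 + p) = 0 := by linear_combination hx - hy
  linear_combination (mul_eq_zero.mp h).resolve_left (sub_ne_zero.mpr hxy)

theorem cubic_discr_eq_sq_of_roots (hx : x ^ 3 + p * x + q = 0)
    (hs : x ^ 2 + x * y + y ^ 2 = -p) :
    -4 * p ^ 3 - 27 * q ^ 2 = ((x - y) * (2 * x + y) * (x + 2 * y)) ^ 2 := by
  linear_combination (-4 * (p ^ 2 - p * (x ^ 2 + x * y + y ^ 2) + (x ^ 2 + x * y + y ^ 2) ^ 2)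
    + 27 * x * (q + x * y * (x + y))) * hs - 27 * (q + x * y * (x + y)) * hx

theorem sq_eq_of_cubic_roots (hx : x ^ 3 + p * x + q = 0) (hs : x ^ 2 + x * y + y ^ 2 = -p) :
    6 * p * x ^ 2 = -4 * p ^ 2 + (9 * q - (x - y) * (2 * x + y) * (x + 2 * y)) * x
      - 2 * ((x - y) * (2 * x + y) * (x + 2 * y)) * y := by
  linear_combination (15 * x ^ 2 + 4 * p - 4 * (x ^ 2 + x * y + y ^ 2)) * hs - 9 * x * hx

end CubicRoots

theorem exists_eq_six_mul_sub_three_mul_of_four_mul_eq {a s m : ℤ}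
    (h : 4 * m = a ^ 2 + 3 * s ^ 2) (ha : 3 ∣ a) (hs : 3 ∣ s) :
    ∃ A B : ℤ, a = 6 * A - 3 * B ∧ s = 3 * B ∧ 9 * (A ^ 2 - A * B + B ^ 2) = m := by
  have hpar : Even (a + s) := by
    have h2 : Even (a ^ 2 + 3 * s ^ 2) := ⟨2 * m, by linarith⟩
    simpa [parity_simps, show ¬Even (3 : ℤ) by decide] using h2
  obtain ⟨B, rfl⟩ := hs
  obtain ⟨A, hA⟩ : ∃ A, a = 6 * A - 3 * B := by
    obtain ⟨k, hk⟩ := hpar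
    exact ⟨(a + 3 * B) / 6, by omega⟩
  refine ⟨A, B, hA, rfl, ?_⟩
  subst hA
  linarith

theorem AlgEquiv.apply_ne_self_of_adjoin_eq_top {R A : Type*} [CommRing R] [Ring A] [Algebra R A]
    {σ : A ≃ₐ[R] A} (hσ : σ ≠ 1) {x : A} (hx : Algebra.adjoin R {x} = ⊤) : σ x ≠ x := by
  intro hfix
  refine hσ (AlgEquiv.coe_toAlgHom_injective ?_)
  exact AlgHom.ext_of_adjoin_eq_top hx (by simpa [Set.EqOn] using hfix)

theorem statement11_general
    (K : Type) [Field K] [NumberField K]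
    (σ : K ≃ₐ[ℚ] K) (hσ1 : σ ≠ 1)
    (m : ℕ)
    (a b : ℤ) (ha : a % 9 = 6) (hb : b % 9 = 3 ∨ b % 9 = 6)
    (hab : 4 * (m : ℤ) = a ^ 2 + 3 * b ^ 2)
    (α : K) (hgen : Algebra.adjoin ℚ {α} = ⊤)
    (hα : 27 * α ^ 3 - 9 * (m : K) * α - (a : K) * (m : K) = 0) :
    ∃ A B : ℤ, (A : ℚ) ^ 2 - (A : ℚ) * (B : ℚ) + (B : ℚ) ^ 2 = (m : ℚ) / 9 ∧
      α ^ 2 = 2 * (m : K) / 9 + (A : K) * α + (B : K) * σ α := by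
  have hm : (m : K) ≠ 0 := by
    have hb0 : b ≠ 0 := by omega
    have : 0 < (m : ℤ) := by nlinarith [sq_nonneg a, sq_pos_of_ne_zero hb0]
    exact_mod_cast this.ne'
  have hmonic : ∀ x : K, 27 * x ^ 3 - 9 * (m : K) * x - (a : K) * (m : K) = 0 →
      x ^ 3 + (-(m : K) / 3) * x + (-(a * m : K) / 27) = 0 :=
    fun x hx => by linear_combination hx / 27
  have hσα : 27 * σ α ^ 3 - 9 * (m : K) * σ α - (a : K) * (m : K) = 0 := by
    simpa [map_ofNat] using congrArg σ hα
  have hs := sq_add_mul_add_sq_of_cubic_roots (hmonic α hα) (hmonic _ hσα)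
    (AlgEquiv.apply_ne_self_of_adjoin_eq_top hσ1 hgen).symm
  have hdisc : ((α - σ α) * (2 * α + σ α) * (α + 2 * σ α)) ^ 2 = ((m : K) * b / 3) ^ 2 := by
    rw [← cubic_discr_eq_sq_of_roots (hmonic α hα) hs]
    have habK : 4 * (m : K) = a ^ 2 + 3 * b ^ 2 := by exact_mod_cast hab
    linear_combination ((m : K) ^ 2 / 27) * habK
  obtain ⟨s, hsb, hD⟩ : ∃ s : ℤ, (s = b ∨ s = -b) ∧
      (α - σ α) * (2 * α + σ α) * (α + 2 * σ α) = m * s / 3 := by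
    rcases sq_eq_sq_iff_eq_or_eq_neg.mp hdisc with h | h
    · exact ⟨b, .inl rfl, h⟩
    · exact ⟨-b, .inr rfl, by rw [h]; push_cast; ring⟩
  obtain ⟨A, B, haAB, hsB, hnorm⟩ := exists_eq_six_mul_sub_three_mul_of_four_mul_eq
    (by rcases hsb with rfl | rfl <;> linear_combination hab : 4 * (m : ℤ) = a ^ 2 + 3 * s ^ 2)
    (by omega) (by rcases hsb with rfl | rfl <;> omega)
  refine ⟨A, B, by rw [eq_div_iff (by norm_num)]; exact_mod_cast by linear_combination hnorm, ?_⟩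
  have haK : (a : K) = 6 * A - 3 * B := by exact_mod_cast haAB
  have hsK : (s : K) = 3 * B := by exact_mod_cast hsB
  apply mul_left_cancel₀ (mul_ne_zero two_ne_zero hm)
  linear_combination (-1 : K) * sq_eq_of_cubic_roots (hmonic α hα) hs + (α + 2 * σ α) * hD
    + (m * α / 3 : K) * haK + (m / 3 * (α + 2 * σ α) : K) * hsK

/-- With `F` the cyclic cubic field of conductor `m = 9p₁⋯p_r`
(`pᵢ ≡ 1 mod 3` distinct primes) from the Hasse parametrization, with `α` a root of
`x³ − (m/3)x − am/27`, there exist integers `A, B` with `A² − AB + B² = m/9` and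
`α² = 2m/9 + Aα + Bσ(α)`. -/
theorem statement11
    (K : Type) [Field K] [NumberField K] [IsGalois ℚ K]
    (hdim : Module.finrank ℚ K = 3)
    (σ : K ≃ₐ[ℚ] K) (hσ1 : σ ≠ 1) (hσ3 : σ ^ 3 = 1)
    (r : ℕ) (p : Fin r → ℕ) (hpprime : ∀ i, Nat.Prime (p i))
    (hpmod : ∀ i, p i % 3 = 1) (hpinj : Function.Injective p)
    (m : ℕ) (hm : m = 9 * ∏ i, p i)
    (a b : ℤ) (ha : a % 9 = 6) (hb : b % 9 = 3 ∨ b % 9 = 6) (hbpos : 0 < b)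
    (hab : 4 * (m : ℤ) = a ^ 2 + 3 * b ^ 2)
    (α : K) (hgen : Algebra.adjoin ℚ {α} = ⊤)
    (hα : 27 * α ^ 3 - 9 * (m : K) * α - (a : K) * (m : K) = 0) :
    ∃ A B : ℤ, (A : ℚ) ^ 2 - (A : ℚ) * (B : ℚ) + (B : ℚ) ^ 2 = (m : ℚ) / 9 ∧
      α ^ 2 = 2 * (m : K) / 9 + (A : K) * α + (B : K) * σ α :=
  statement11_general K σ hσ1 m a b ha hb hab α hgen hα
end

section
/- Let N be a product of finitely many (one or more) distinct primes, each congruent to 1 modulo 3. Then there exist integers x and y such that x + y + 1 ≡ 0 (mod 3) and N = x² − xy + y². -/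
/-!
Each prime `p ≡ 1 (mod 3)` is a value of the norm form `x² + xy + y²` of `ℤ[ζ₃]`: `𝔽_p` contains a
root `ω` of `X² + X + 1`, and Thue's lemma gives `x ≡ ω y (mod p)` with `x², y² < p`, so
`x² + xy + y²` is a multiple of `p` below `3p`, and it cannot be `2p` by parity. The norm is
multiplicative, so `N` is a norm `a² − ab + b²`; as `N ≡ (a + b)² (mod 3)`, `a + b` is prime to
`3`, and the sign of `(a, b)` can be chosen to make `a + b ≡ 2 (mod 3)`.
-/

theorem FiniteField.exists_sq_add_add_one_eq_zero {F : Type*} [Field F] [Fintype F]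
    (hF : Fintype.card F % 3 = 1) : ∃ ω : F, ω ^ 2 + ω + 1 = 0 := by
  classical
  have : Fact (Nat.Prime 3) := ⟨Nat.prime_three⟩
  have h3 : 3 ∣ Fintype.card Fˣ := by rw [Fintype.card_units]; omega
  obtain ⟨ζ, hζ⟩ := exists_prime_orderOf_dvd_card 3 h3
  have hprim : IsPrimitiveRoot (ζ : F) 3 :=
    IsPrimitiveRoot.coe_units_iff.mpr (IsPrimitiveRoot.iff_orderOf.mpr hζ)
  have hsum := hprim.geom_sum_eq_zero (by norm_num)
  simp only [Finset.sum_range_succ, Finset.sum_range_zero, pow_zero, pow_one, zero_add] at hsum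
  exact ⟨ζ, by linear_combination hsum⟩

theorem ZMod.thue (n : ℕ) [NeZero n] (t : ZMod n) :
    ∃ x y : ℤ, (x ≠ 0 ∨ y ≠ 0) ∧ x ^ 2 ≤ n ∧ y ^ 2 ≤ n ∧ (x : ZMod n) = t * y := by
  set k := Nat.sqrt n
  have hcard : Fintype.card (ZMod n) < Fintype.card (Fin (k + 1) × Fin (k + 1)) := by
    simpa [ZMod.card, ← sq] using Nat.lt_succ_sqrt' n
  obtain ⟨⟨a₁, b₁⟩, ⟨a₂, b₂⟩, hne, heq⟩ := Fintype.exists_ne_map_eq_of_card_lt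
    (fun ab : Fin (k + 1) × Fin (k + 1) => ((ab.1 : ℕ) : ZMod n) - t * (ab.2 : ℕ)) hcard
  have hk : (k : ℤ) ^ 2 ≤ n := by exact_mod_cast Nat.sqrt_le' n
  have small : ∀ a b : Fin (k + 1), ((a : ℤ) - b) ^ 2 ≤ n := fun a b =>
    (sq_le_sq' (by omega) (by omega)).trans hk
  refine ⟨(a₁ : ℤ) - a₂, (b₁ : ℤ) - b₂, ?_, small a₁ a₂, small b₁ b₂, ?_⟩
  · by_contra! h
    exact hne (by rw [Prod.mk.injEq, Fin.ext_iff, Fin.ext_iff]; omega)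
  · push_cast
    linear_combination heq

theorem sq_add_mul_add_sq_ne_two_mul_of_odd (x y q : ℤ) (hq : Odd q) :
    x ^ 2 + x * y + y ^ 2 ≠ 2 * q := by
  obtain ⟨k, rfl⟩ := hq
  intro h
  have h4 := congrArg (Int.cast : ℤ → ZMod 4) h
  push_cast at h4
  revert h4
  generalize (x : ZMod 4) = u
  generalize (y : ZMod 4) = v
  generalize (k : ZMod 4) = w
  revert u v w
  decide

def eisensteinNorms : Submonoid ℤ where
  carrier := {n | ∃ x y : ℤ, n = x ^ 2 - x * y + y ^ 2}
  one_mem' := ⟨1, 0, by ring⟩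
  -- `(a + bζ)(u + vζ) = (au − bv) + (av + bu − bv)ζ`, using `ζ² = −1 − ζ`
  mul_mem' := by
    rintro _ _ ⟨a, b, rfl⟩ ⟨u, v, rfl⟩
    exact ⟨a * u - b * v, a * v + b * u - b * v, by ring⟩

theorem Nat.Prime.natCast_mem_eisensteinNorms {p : ℕ} (hp : p.Prime) (h3 : p % 3 = 1) :
    (p : ℤ) ∈ eisensteinNorms := by
  have := Fact.mk hp
  obtain ⟨ω, hω⟩ := FiniteField.exists_sq_add_add_one_eq_zero (F := ZMod p) (by rwa [ZMod.card])
  obtain ⟨x, y, hxy, hx, hy, hxωy⟩ := ZMod.thue p ω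
  have hdvd : (p : ℤ) ∣ x ^ 2 + x * y + y ^ 2 := by
    rw [← ZMod.intCast_zmod_eq_zero_iff_dvd]
    push_cast
    rw [hxωy]
    linear_combination (y : ZMod p) ^ 2 * hω
  have not_sq : ∀ z : ℤ, z ^ 2 ≠ p := fun z hz =>
    (Nat.prime_iff_prime_int.mp hp).not_isSquare ⟨z, by rw [← hz, sq]⟩
  have hx' : x ^ 2 < p := lt_of_le_of_ne hx (not_sq x)
  have hy' : y ^ 2 < p := lt_of_le_of_ne hy (not_sq y)
  have hpos : 0 < x ^ 2 + x * y + y ^ 2 := by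
    rcases hxy with h | h <;> nlinarith [sq_nonneg (x + y), sq_pos_of_ne_zero h]
  obtain ⟨m, hm⟩ := hdvd
  have hm12 : m = 1 ∨ m = 2 := by
    have : 0 < m := by nlinarith
    have : m < 3 := by nlinarith [sq_nonneg (x - y)]
    omega
  rcases hm12 with rfl | rfl
  · exact ⟨x, -y, by linear_combination -hm⟩
  · have hodd : Odd (p : ℤ) := by exact_mod_cast hp.odd_of_ne_two (by omega)
    exact absurd (by linear_combination hm) (sq_add_mul_add_sq_ne_two_mul_of_odd x y p hodd)

theorem exists_add_add_one_emod_three_eq_zero {n : ℤ} (hn : n ∈ eisensteinNorms)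
    (h3 : n % 3 = 1) : ∃ x y : ℤ, (x + y + 1) % 3 = 0 ∧ n = x ^ 2 - x * y + y ^ 2 := by
  obtain ⟨a, b, rfl⟩ := hn
  have hsq : (a + b) ^ 2 % 3 = 1 := by
    have : a ^ 2 - a * b + b ^ 2 = (a + b) ^ 2 - 3 * (a * b) := by ring
    omega
  have hndvd : ¬ (3 : ℤ) ∣ a + b := by
    rintro ⟨q, hq⟩
    have : (a + b) ^ 2 = 3 * (3 * q ^ 2) := by rw [hq]; ring
    omega
  by_cases h : (a + b) % 3 = 2
  · exact ⟨a, b, by omega, rfl⟩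
  · exact ⟨-a, -b, by omega, by ring⟩

theorem statement12_general
    (r : ℕ)
    (p : Fin r → ℕ) (hpprime : ∀ i, Nat.Prime (p i))
    (hpmod : ∀ i, p i % 3 = 1)
    (N : ℕ) (hN : N = ∏ i, p i) :
    ∃ x y : ℤ, (x + y + 1) % 3 = 0 ∧ (N : ℤ) = x ^ 2 - x * y + y ^ 2 := by
  subst hN
  have hnorm : ((∏ i, p i : ℕ) : ℤ) ∈ eisensteinNorms := by
    push_cast
    exact prod_mem fun i _ => (hpprime i).natCast_mem_eisensteinNorms (hpmod i)
  have hmod : (∏ i, p i) % 3 = 1 := by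
    rw [Finset.prod_nat_mod]
    simp [hpmod]
  exact exists_add_add_one_emod_three_eq_zero hnorm (by omega)

/-- Let `N` be a product of finitely many (one or more) distinct
primes, each congruent to `1` modulo `3`.  Then there exist integers `x, y` with
`x + y + 1 ≡ 0 (mod 3)` and `N = x² − xy + y²`. -/
theorem statement12
    (r : ℕ) (hr : 1 ≤ r)
    (p : Fin r → ℕ) (hpprime : ∀ i, Nat.Prime (p i))
    (hpmod : ∀ i, p i % 3 = 1) (hpinj : Function.Injective p)
    (N : ℕ) (hN : N = ∏ i, p i) :
    ∃ x y : ℤ, (x + y + 1) % 3 = 0 ∧ (N : ℤ) = x ^ 2 - x * y + y ^ 2 :=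
  statement12_general r p hpprime hpmod N hN
end
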